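/- Stability of normalization in L²: Let D ⊂ ℝ^p be measurable with Lebesgue measure 0 < |D| < ∞, and let a > 0, M > 0. Let f, g : D → ℝ be measurable with |f(z)| ≤ M for all z ∈ D, ∫_D f ≥ a, ∫_D g ≥ a/2, and g ∈ L²(D). Then ‖ g/∫_D g − f/∫_D f ‖_{L²(D)} ≤ (2/a + 2M|D|/a²) ‖ g − f ‖_{L²(D)}. -/

import Mathlib

/-!
Write `g / ∫ g - f / ∫ f = (g - f) / ∫ g + f · (∫ f - ∫ g) / (∫ g · ∫ f)` and apply the
triangle inequality in `L²(D)`. The first term has norm `‖g - f‖ / ∫ g ≤ (2 / a) ‖g - f‖`.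
In the second, `‖f‖ ≤ M |D|^{1/2}`, Cauchy–Schwarz gives
`|∫ f - ∫ g| ≤ |D|^{1/2} ‖g - f‖`, and `∫ g · ∫ f ≥ a² / 2`.
-/

namespace MeasureTheory

variable {α : Type*} [MeasurableSpace α] {μ : Measure α}

theorem sqrt_integral_sq_eq_toReal_eLpNorm {u : α → ℝ} (hu : MemLp u 2 μ) :
    √(∫ a, u a ^ 2 ∂μ) = (eLpNorm u 2 μ).toReal := by
  rw [hu.eLpNorm_eq_integral_rpow_norm two_ne_zero ENNReal.ofNat_ne_top, ENNReal.toReal_ofNat,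
    ENNReal.toReal_ofReal (by positivity), Real.sqrt_eq_rpow, one_div]
  simp only [Real.rpow_two, Real.norm_eq_abs, sq_abs]

theorem sqrt_integral_sq_add_le {u v : α → ℝ} (hu : MemLp u 2 μ) (hv : MemLp v 2 μ) :
    √(∫ a, (u a + v a) ^ 2 ∂μ) ≤ √(∫ a, u a ^ 2 ∂μ) + √(∫ a, v a ^ 2 ∂μ) := by
  rw [show √(∫ a, (u a + v a) ^ 2 ∂μ) = (eLpNorm (u + v) 2 μ).toReal from
      sqrt_integral_sq_eq_toReal_eLpNorm (hu.add hv), sqrt_integral_sq_eq_toReal_eLpNorm hu,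
    sqrt_integral_sq_eq_toReal_eLpNorm hv, ← ENNReal.toReal_add hu.eLpNorm_ne_top hv.eLpNorm_ne_top]
  exact ENNReal.toReal_mono (ENNReal.add_ne_top.2 ⟨hu.eLpNorm_ne_top, hv.eLpNorm_ne_top⟩)
    (eLpNorm_add_le hu.1 hv.1 one_le_two)

theorem sqrt_integral_sq_const_mul (c : ℝ) (u : α → ℝ) :
    √(∫ a, (c * u a) ^ 2 ∂μ) = |c| * √(∫ a, u a ^ 2 ∂μ) := by
  simp only [mul_pow, integral_const_mul, Real.sqrt_mul (sq_nonneg c), Real.sqrt_sq_eq_abs]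

theorem sqrt_integral_sq_le_of_ae_abs_le [IsFiniteMeasure μ] {u : α → ℝ} {M : ℝ} (hM : 0 ≤ M)
    (hu : ∀ᵐ a ∂μ, |u a| ≤ M) : √(∫ a, u a ^ 2 ∂μ) ≤ M * √(μ.real Set.univ) := by
  have h : ∫ a, u a ^ 2 ∂μ ≤ ∫ _, M ^ 2 ∂μ :=
    integral_mono_of_nonneg (.of_forall fun a => sq_nonneg (u a)) (integrable_const _)
      (hu.mono fun a ha => sq_le_sq' (abs_le.1 ha).1 (abs_le.1 ha).2)
  rw [integral_const, smul_eq_mul, mul_comm] at h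
  calc √(∫ a, u a ^ 2 ∂μ) ≤ √(M ^ 2 * μ.real Set.univ) := Real.sqrt_le_sqrt h
    _ = M * √(μ.real Set.univ) := by rw [Real.sqrt_mul (sq_nonneg M), Real.sqrt_sq hM]

/-- The discriminant of the nonnegative quadratic `t ↦ ∫ (u - t)²` is nonpositive. -/
theorem abs_integral_le_sqrt_measureReal_mul_sqrt_integral_sq [IsFiniteMeasure μ] {u : α → ℝ}
    (hu : MemLp u 2 μ) : |∫ a, u a ∂μ| ≤ √(μ.real Set.univ) * √(∫ a, u a ^ 2 ∂μ) := by
  have hquad : ∀ t : ℝ,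
      0 ≤ μ.real Set.univ * (t * t) + (-2 * ∫ a, u a ∂μ) * t + ∫ a, u a ^ 2 ∂μ := by
    intro t
    have hexp : ∫ a, (u a - t) ^ 2 ∂μ =
        μ.real Set.univ * (t * t) + (-2 * ∫ a, u a ∂μ) * t + ∫ a, u a ^ 2 ∂μ := by
      have hlin : Integrable (fun a => 2 * u a * t) μ :=
        ((hu.integrable one_le_two).const_mul 2).mul_const t
      have hsub : Integrable (fun a => u a ^ 2 - 2 * u a * t) μ := hu.integrable_sq.sub hlin
      simp_rw [sub_sq]
      rw [integral_add hsub (integrable_const _),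
        integral_sub hu.integrable_sq hlin, integral_mul_const, integral_const_mul, integral_const,
        smul_eq_mul]
      ring
    exact hexp ▸ integral_nonneg fun a => sq_nonneg _
  have hdisc := discrim_le_zero hquad
  rw [discrim] at hdisc
  rw [← Real.sqrt_mul measureReal_nonneg]
  exact Real.abs_le_sqrt (by nlinarith)

theorem sqrt_integral_sq_div_integral_sub_div_integral_le [IsFiniteMeasure μ] {f g : α → ℝ}
    {M : ℝ} (hM : 0 ≤ M) (hf : AEStronglyMeasurable f μ) (hfM : ∀ᵐ a ∂μ, |f a| ≤ M)
    (hg : MemLp g 2 μ) (hIf : ∫ a, f a ∂μ ≠ 0) (hIg : ∫ a, g a ∂μ ≠ 0) :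
    √(∫ a, (g a / ∫ b, g b ∂μ - f a / ∫ b, f b ∂μ) ^ 2 ∂μ) ≤
      (|∫ a, g a ∂μ|⁻¹ + M * μ.real Set.univ / |(∫ a, g a ∂μ) * ∫ a, f a ∂μ|) *
        √(∫ a, (g a - f a) ^ 2 ∂μ) := by
  set If := ∫ a, f a ∂μ
  set Ig := ∫ a, g a ∂μ
  set V := μ.real Set.univ
  set N := √(∫ a, (g a - f a) ^ 2 ∂μ)
  have hf2 : MemLp f 2 μ := .of_bound hf M hfM
  set c := (If - Ig) / (Ig * If) with hc_def
  have hsplit : ∀ a, g a / Ig - f a / If = Ig⁻¹ * (g a - f a) + c * f a := by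
    intro a
    rw [hc_def]
    field_simp
    ring
  have hc : |c| ≤ √V * N / |Ig * If| := by
    have hdiff : If - Ig = -∫ a, (g a - f a) ∂μ := by
      rw [integral_sub (hg.integrable one_le_two) (hf2.integrable one_le_two)]
      ring
    rw [abs_div, hdiff, abs_neg]
    gcongr
    exact abs_integral_le_sqrt_measureReal_mul_sqrt_integral_sq (hg.sub hf2)
  calc √(∫ a, (g a / Ig - f a / If) ^ 2 ∂μ)
      = √(∫ a, (Ig⁻¹ * (g a - f a) + c * f a) ^ 2 ∂μ) := by simp_rw [hsplit]
    _ ≤ |Ig⁻¹| * N + |c| * √(∫ a, f a ^ 2 ∂μ) := by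
        rw [← sqrt_integral_sq_const_mul, ← sqrt_integral_sq_const_mul]
        exact sqrt_integral_sq_add_le ((hg.sub hf2).const_mul _) (hf2.const_mul _)
    _ ≤ |Ig|⁻¹ * N + √V * N / |Ig * If| * (M * √V) := by
        rw [abs_inv]
        gcongr
        exact sqrt_integral_sq_le_of_ae_abs_le hM hfM
    _ = (|Ig|⁻¹ + M * V / |Ig * If|) * N := by
        rw [show √V * N / |Ig * If| * (M * √V) = M * (√V * √V) * N / |Ig * If| by ring,
          Real.mul_self_sqrt measureReal_nonneg]
        ring

end MeasureTheory

open MeasureTheory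

theorem normalization_stability_L2 (p : ℕ)
    (D : Set (EuclideanSpace ℝ (Fin p))) (hDmeas : MeasurableSet D)
    (hDfin : volume D < ⊤)
    (a M : ℝ) (ha : 0 < a) (hM : 0 < M)
    (f g : EuclideanSpace ℝ (Fin p) → ℝ)
    (hfmeas : Measurable f)
    (hfM : ∀ z ∈ D, |f z| ≤ M)
    (hfa : a ≤ ∫ z in D, f z)
    (hga : a / 2 ≤ ∫ z in D, g z)
    (hg2 : MemLp g 2 (volume.restrict D)) :
    Real.sqrt (∫ z in D, (g z / (∫ w in D, g w) - f z / (∫ w in D, f w)) ^ 2) ≤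
      (2 / a + 2 * M * (volume D).toReal / a ^ 2) *
        Real.sqrt (∫ z in D, (g z - f z) ^ 2) := by
  have : IsFiniteMeasure (volume.restrict D) := isFiniteMeasure_restrict.2 hDfin.ne
  have hIf : 0 < ∫ z in D, f z := ha.trans_le hfa
  have hIg : 0 < ∫ z in D, g z := (half_pos ha).trans_le hga
  have hfM' : ∀ᵐ z ∂volume.restrict D, |f z| ≤ M := (ae_restrict_iff' hDmeas).2 (.of_forall hfM)
  refine (sqrt_integral_sq_div_integral_sub_div_integral_le hM.le hfmeas.aestronglyMeasurable
    hfM' hg2 hIf.ne' hIg.ne').trans ?_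
  rw [measureReal_restrict_apply_univ, measureReal_def, abs_of_pos hIg,
    abs_of_pos (mul_pos hIg hIf)]
  have hinv : (∫ z in D, g z)⁻¹ ≤ 2 / a := by
    simpa only [inv_div] using inv_anti₀ (half_pos ha) hga
  have hprod : a ^ 2 / 2 ≤ (∫ z in D, g z) * ∫ z in D, f z := by nlinarith
  rw [show 2 * M * (volume D).toReal / a ^ 2 = M * (volume D).toReal / (a ^ 2 / 2) by
    field_simp]
  gcongr
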